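/- arXiv:1802.07812 — 10 statements merged into one kernel-verified Lean document; each statement's English description precedes it below -/
import Mathlib

section
/- Let K and Q be n×n real matrices such that det(I + K S) = det(I + Q S) for all diagonal matrices S with strictly positive diagonal entries. Then for every subset I of {1,...,n}, the principal submatrices satisfy det(K_I) = det(Q_I). -/
/-!
Expanding the determinant row by row gives
`det (1 + diagonal s * M) = ∑_J det M_J * ∏_{i ∈ J} s i`, a polynomial in `s` of degree at
most one in each variable whose coefficients are the principal minors of `M`. Since
`det (1 + K S) = det (1 + S K)`, the hypothesis says that the two such polynomials for `K` and
`Q` agree on `{1, 2}ⁿ`, and by the combinatorial Nullstellensatz a polynomial of degree at most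
one in each variable vanishing on `{1, 2}ⁿ` is zero.
-/

open Finset Matrix MvPolynomial

theorem Matrix.det_one_add_diagonal_mul {ι R : Type*} [Fintype ι] [DecidableEq ι] [CommRing R]
    (s : ι → R) (M : Matrix ι ι R) :
    (1 + diagonal s * M).det =
      ∑ J : Finset ι, (M.submatrix (↑) (↑) : Matrix J J R).det * ∏ i ∈ J, s i := by
  let D := (detRowAlternating : (ι → R) [⋀^ι]→ₗ[R] R)
  have hrows : 1 + diagonal s * M = (fun i => s i • M i) + fun i => (1 : Matrix ι ι R) i := by
    ext i j
    simp [diagonal_mul, add_comm]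
  change D _ = _
  rw [hrows, D.map_add_univ]
  refine Finset.sum_congr rfl fun J _ => ?_
  have hpiecewise : J.piecewise (fun i => s i • M i) (fun i => (1 : Matrix ι ι R) i) =
      fun i => (if i ∈ J then s i else 1) • J.piecewise M.row (1 : Matrix ι ι R).row i := by
    ext i j
    by_cases hi : i ∈ J <;> simp [hi]
  rw [hpiecewise, D.map_smul_univ, Finset.prod_ite_mem, Finset.univ_inter, smul_eq_mul, mul_comm]
  congr 1
  exact det_piecewise_one_eq_submatrix_det M J

section Multiaffine

variable {ι R : Type*} [Fintype ι] [CommRing R]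

noncomputable def multiaffinePoly (c : Finset ι → R) : MvPolynomial ι R :=
  ∑ J : Finset ι, C (c J) * ∏ i ∈ J, X i

theorem eval_multiaffinePoly (c : Finset ι → R) (s : ι → R) :
    eval s (multiaffinePoly c) = ∑ J : Finset ι, c J * ∏ i ∈ J, s i := by
  simp [multiaffinePoly]

theorem degreeOf_multiaffinePoly_le [DecidableEq ι] [Nontrivial R] (c : Finset ι → R) (i : ι) :
    (multiaffinePoly c).degreeOf i ≤ 1 := by
  refine (degreeOf_sum_le _ _ _).trans (Finset.sup_le fun J _ => ?_)
  refine (degreeOf_C_mul_le _ _ _).trans ((degreeOf_prod_le _ _ _).trans ?_)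
  simp only [degreeOf_X]
  rw [Finset.sum_ite_eq]
  split_ifs <;> simp

theorem coeff_multiaffinePoly [DecidableEq ι] (c : Finset ι → R) (J : Finset ι) :
    (multiaffinePoly c).coeff (∑ i ∈ J, Finsupp.single i 1) = c J := by
  have hinj : Function.Injective fun J : Finset ι => ∑ i ∈ J, Finsupp.single i 1 := by
    intro J J' h
    ext i
    have hi := DFunLike.congr_fun h i
    simp only [Finsupp.finsetSum_apply, Finsupp.single_apply, Finset.sum_ite_eq'] at hi
    split_ifs at hi <;> simp_all
  simp only [multiaffinePoly, coeff_sum, coeff_C_mul, X, ← monomial_sum_one, coeff_monomial,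
    hinj.eq_iff, mul_ite, mul_one, mul_zero, Finset.sum_ite_eq', Finset.mem_univ, if_true]

theorem eq_zero_of_sum_mul_prod_eq_zero [IsDomain R] (S : Finset R) (hS : 1 < #S)
    (c : Finset ι → R)
    (h : ∀ s : ι → R, (∀ i, s i ∈ S) → ∑ J : Finset ι, c J * ∏ i ∈ J, s i = 0) :
    c = 0 := by
  classical
  have hP : multiaffinePoly c = 0 :=
    eq_zero_of_eval_zero_at_prod_finset _ (fun _ => S)
      (fun i => (degreeOf_multiaffinePoly_le c i).trans_lt hS)
      (fun s hs => (eval_multiaffinePoly c s).trans (h s hs))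
  funext J
  rw [← coeff_multiaffinePoly c J, hP, coeff_zero, Pi.zero_apply]

end Multiaffine

theorem principal_minors_eq (n : ℕ) (K Q : Matrix (Fin n) (Fin n) ℝ)
    (h : ∀ s : Fin n → ℝ, (∀ i, 0 < s i) →
      (1 + K * Matrix.diagonal s).det = (1 + Q * Matrix.diagonal s).det) :
    ∀ I : Finset (Fin n),
      (K.submatrix (fun i : I => (i : Fin n)) (fun i : I => (i : Fin n))).det =
      (Q.submatrix (fun i : I => (i : Fin n)) (fun i : I => (i : Fin n))).det := by
  intro I
  have hminors := eq_zero_of_sum_mul_prod_eq_zero {1, 2} (by norm_num)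
    (fun J : Finset (Fin n) =>
      (K.submatrix (↑) (↑) : Matrix J J ℝ).det - (Q.submatrix (↑) (↑) : Matrix J J ℝ).det)
    fun s hs => by
      have hpos : ∀ i, 0 < s i := fun i => by
        rcases Finset.mem_insert.1 (hs i) with hi | hi <;> simp_all
      have hdet := h s hpos
      rw [det_one_add_mul_comm K, det_one_add_mul_comm Q, det_one_add_diagonal_mul,
        det_one_add_diagonal_mul] at hdet
      simp only [sub_mul, sum_sub_distrib, hdet, sub_self]
  exact sub_eq_zero.1 (congr_fun hminors I)
end

section
/- Let K and Q be n×n real matrices such that det(I + K S) = det(I + Q S) for all diagonal matrices S with strictly positive diagonal entries. Then K_{j,j} = Q_{j,j} for all j = 1,...,n. -/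
theorem diagonal_entries_eq (n : ℕ) (K Q : Matrix (Fin n) (Fin n) ℝ)
    (h : ∀ s : Fin n → ℝ, (∀ i, 0 < s i) →
      (1 + K * Matrix.diagonal s).det = (1 + Q * Matrix.diagonal s).det) :
    ∀ j : Fin n, K j j = Q j j := by
  intro j
  -- define s depending on ε
  set s : ℝ → Fin n → ℝ := fun ε i => if i = j then 1 else ε with hs
  have hcont : ∀ M : Matrix (Fin n) (Fin n) ℝ,
      Continuous fun ε : ℝ => (1 + M * Matrix.diagonal (s ε)).det := by
    intro M
    apply Continuous.matrix_det
    apply continuous_matrix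
    intro i k
    simp only [Matrix.add_apply, Matrix.mul_apply, Matrix.diagonal_apply, hs]
    refine continuous_const.add (continuous_finset_sum _ fun x _ => ?_)
    by_cases hk : k = j <;> by_cases hx : x = k <;> by_cases hj2 : x = j <;>
      simp [hk, hx, hj2] <;> fun_prop
  -- key determinant computation at ε = 0
  have hdet : ∀ M : Matrix (Fin n) (Fin n) ℝ,
      (1 + M * Matrix.diagonal (s 0)).det = 1 + M j j := by
    intro M
    have heq : (1 + M * Matrix.diagonal (s 0)) =
        Matrix.updateCol 1 j (fun i => (1 : Matrix (Fin n) (Fin n) ℝ) i j + M i j) := by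
      ext i k
      simp only [Matrix.add_apply, Matrix.mul_apply, Matrix.diagonal_apply,
        Matrix.updateCol_apply, hs]
      by_cases hk : k = j
      · subst hk
        simp
      · simp [hk, Finset.sum_ite_eq]
    rw [heq, ← Matrix.cramer_apply, Matrix.cramer_one]
    simp [Matrix.one_apply]
  -- equality on (0, ∞) plus continuity gives equality at 0
  have heqlim : (fun ε : ℝ => (1 + K * Matrix.diagonal (s ε)).det) =ᶠ[nhdsWithin 0 (Set.Ioi 0)]
      (fun ε : ℝ => (1 + Q * Matrix.diagonal (s ε)).det) := by
    filter_upwards [self_mem_nhdsWithin] with ε (hε : ε ∈ Set.Ioi (0:ℝ))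
    apply h
    intro i
    simp only [hs]
    split <;> [norm_num; exact hε]
  have hK : Filter.Tendsto (fun ε : ℝ => (1 + K * Matrix.diagonal (s ε)).det)
      (nhdsWithin 0 (Set.Ioi 0)) (nhds (1 + K * Matrix.diagonal (s 0)).det) :=
    ((hcont K).tendsto 0).mono_left nhdsWithin_le_nhds
  have hQ : Filter.Tendsto (fun ε : ℝ => (1 + Q * Matrix.diagonal (s ε)).det)
      (nhdsWithin 0 (Set.Ioi 0)) (nhds (1 + Q * Matrix.diagonal (s 0)).det) :=
    ((hcont Q).tendsto 0).mono_left nhdsWithin_le_nhds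
  have : (1 + K * Matrix.diagonal (s 0)).det = (1 + Q * Matrix.diagonal (s 0)).det := by
    exact tendsto_nhds_unique (hK.congr' heqlim) hQ
  rw [hdet K, hdet Q] at this
  linarith
end

section
/- Let K be an n×n real matrix and Q a symmetric n×n real matrix such that det(I + K S) = det(I + Q S) for all diagonal matrices S with strictly positive diagonal entries. Then |Q_{j,k}| = (K_{j,k} K_{k,j})^{1/2} for all j, k; in particular K_{j,k} K_{k,j} ≥ 0. -/
open Matrix

lemma det_two_point (n : ℕ) (K : Matrix (Fin n) (Fin n) ℝ) (j k : Fin n) (t u : ℝ) :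
    (1 + K * Matrix.diagonal (fun b => (if b = j then t else 0) + (if b = k then u else 0))).det
      = (1 + t * K j j) * (1 + u * K k k) - (t * K j k) * (u * K k j) := by
  set A : Matrix (Fin n) (Fin 2) ℝ := Matrix.of fun i m => if m = 0 then K i j else K i k with hA
  set B : Matrix (Fin 2) (Fin n) ℝ :=
    Matrix.of fun m b => if m = 0 then (if b = j then t else 0) else (if b = k then u else 0)
    with hB
  have hAB : K * Matrix.diagonal (fun b => (if b = j then t else 0) + (if b = k then u else 0))
      = A * B := by
    ext a b
    rw [Matrix.mul_diagonal]
    simp only [Matrix.mul_apply, Fin.sum_univ_two, hA, hB, Matrix.of_apply]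
    norm_num
    split_ifs <;> subst_vars <;> ring
  rw [hAB, Matrix.det_one_add_mul_comm]
  have h00 : (B * A) 0 0 = t * K j j := by
    simp [Matrix.mul_apply, hA, hB, ite_mul]
  have h01 : (B * A) 0 1 = t * K j k := by
    simp [Matrix.mul_apply, hA, hB, ite_mul]
  have h10 : (B * A) 1 0 = u * K k j := by
    simp [Matrix.mul_apply, hA, hB, ite_mul]
  have h11 : (B * A) 1 1 = u * K k k := by
    simp [Matrix.mul_apply, hA, hB, ite_mul]
  rw [Matrix.det_fin_two]
  simp only [Matrix.add_apply, Matrix.one_apply, h00, h01, h10, h11]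
  norm_num

theorem abs_eq_sqrt_prod (n : ℕ) (K Q : Matrix (Fin n) (Fin n) ℝ)
    (hQ : Q.IsSymm)
    (h : ∀ s : Fin n → ℝ, (∀ i, 0 < s i) →
      (1 + K * Matrix.diagonal s).det = (1 + Q * Matrix.diagonal s).det) :
    ∀ j k : Fin n, |Q j k| = Real.sqrt (K j k * K k j) ∧ 0 ≤ K j k * K k j := by
  -- extend the hypothesis to nonnegative s by continuity
  have h' : ∀ s : Fin n → ℝ, (∀ i, 0 ≤ s i) →
      (1 + K * Matrix.diagonal s).det = (1 + Q * Matrix.diagonal s).det := by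
    intro s hs
    have hcont : ∀ M : Matrix (Fin n) (Fin n) ℝ,
        Continuous fun ε : ℝ => (1 + M * Matrix.diagonal (fun i => s i + ε)).det := by
      intro M
      apply Continuous.matrix_det
      apply Continuous.add continuous_const
      apply Continuous.matrix_mul continuous_const
      exact Continuous.matrix_diagonal (by continuity)
    have t1 : Filter.Tendsto (fun ε : ℝ => (1 + K * Matrix.diagonal (fun i => s i + ε)).det)
        (nhdsWithin 0 (Set.Ioi 0)) (nhds ((1 + K * Matrix.diagonal s).det)) := by
      have := ((hcont K).tendsto 0).mono_left (nhdsWithin_le_nhds (s := Set.Ioi (0:ℝ)))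
      simpa using this
    have t2 : Filter.Tendsto (fun ε : ℝ => (1 + Q * Matrix.diagonal (fun i => s i + ε)).det)
        (nhdsWithin 0 (Set.Ioi 0)) (nhds ((1 + Q * Matrix.diagonal s).det)) := by
      have := ((hcont Q).tendsto 0).mono_left (nhdsWithin_le_nhds (s := Set.Ioi (0:ℝ)))
      simpa using this
    have heq : (fun ε : ℝ => (1 + K * Matrix.diagonal (fun i => s i + ε)).det)
        =ᶠ[nhdsWithin 0 (Set.Ioi 0)]
        (fun ε : ℝ => (1 + Q * Matrix.diagonal (fun i => s i + ε)).det) := by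
      filter_upwards [self_mem_nhdsWithin] with ε hε
      exact h _ fun i => by have h1 := hs i; have h2 : (0:ℝ) < ε := hε; positivity
    exact tendsto_nhds_unique (t1.congr' heq) t2
  intro j k
  have key : ∀ t u : ℝ, 0 < t → 0 < u →
      (1 + t * K j j) * (1 + u * K k k) - (t * K j k) * (u * K k j)
        = (1 + t * Q j j) * (1 + u * Q k k) - (t * Q j k) * (u * Q k j) := by
    intro t u ht hu
    rw [← det_two_point, ← det_two_point]
    refine h' _ fun i => ?_
    split_ifs <;> linarith
  have h1 := key 1 1 one_pos one_pos
  have h2 := key 1 2 one_pos two_pos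
  have h3 := key 2 1 two_pos one_pos
  have h4 := key 3 3 three_pos three_pos
  have hjj : K j j = Q j j := by nlinarith [h1, h2, h3, h4]
  have hkk : K k k = Q k k := by nlinarith [h1, h2, h3, h4]
  have hprod : K j k * K k j = Q j k * Q k j := by
    linear_combination -h1 + (1 + K k k) * hjj + (1 + Q j j) * hkk
  have hsym : Q k j = Q j k := hQ.apply j k
  rw [hsym] at hprod
  constructor
  · rw [hprod, Real.sqrt_mul_self_eq_abs]
  · rw [hprod]; exact mul_self_nonneg _
end

section
/- Let K be an n×n real matrix (n ≥ 3) and Q a symmetric n×n real matrix such that det(I + K S) = det(I + Q S) for all diagonal matrices S with strictly positive diagonal entries. Then for all distinct indices i₁, i₂, i₃ in {1,...,n}: K_{i₁,i₂} K_{i₂,i₃} K_{i₃,i₁} = K_{i₁,i₃} K_{i₂,i₁} K_{i₃,i₂}. -/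
open Matrix

lemma aux_det (n : ℕ) (K : Matrix (Fin n) (Fin n) ℝ) (i₁ i₂ i₃ : Fin n)
    (h12 : i₁ ≠ i₂) (h13 : i₁ ≠ i₃) (h23 : i₂ ≠ i₃) (x y z : ℝ) :
    (1 + K * Matrix.diagonal (fun j => if j = i₁ then x else if j = i₂ then y else if j = i₃ then z else 0)).det
      = 1 + x * K i₁ i₁ + y * K i₂ i₂ + z * K i₃ i₃
        + x*y*(K i₁ i₁ * K i₂ i₂ - K i₁ i₂ * K i₂ i₁)
        + x*z*(K i₁ i₁ * K i₃ i₃ - K i₁ i₃ * K i₃ i₁)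
        + y*z*(K i₂ i₂ * K i₃ i₃ - K i₂ i₃ * K i₃ i₂)
        + x*y*z*(K i₁ i₁ * (K i₂ i₂ * K i₃ i₃ - K i₂ i₃ * K i₃ i₂)
            - K i₁ i₂ * (K i₂ i₁ * K i₃ i₃ - K i₂ i₃ * K i₃ i₁)
            + K i₁ i₃ * (K i₂ i₁ * K i₃ i₂ - K i₂ i₂ * K i₃ i₁)) := by
  have hAB : K * Matrix.diagonal (fun j => if j = i₁ then x else if j = i₂ then y else if j = i₃ then z else 0)
      = (Matrix.of fun j a => K j (![i₁, i₂, i₃] a)) *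
        (Matrix.of fun (a : Fin 3) j => if j = ![i₁, i₂, i₃] a then
          (if j = i₁ then x else if j = i₂ then y else if j = i₃ then z else 0) else 0) := by
    ext j k
    rw [Matrix.mul_diagonal]
    simp only [Matrix.mul_apply, Matrix.of_apply, Fin.sum_univ_three,
      Matrix.cons_val_zero, Matrix.cons_val_one, Matrix.head_cons, Matrix.cons_val_two, Matrix.tail_cons]
    by_cases hk1 : k = i₁
    · simp [hk1, h12, h13, h23, h12.symm, h13.symm, h23.symm]
    · by_cases hk2 : k = i₂
      · simp [hk2, hk1, h12, h13, h23, h12.symm, h13.symm, h23.symm]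
      · by_cases hk3 : k = i₃
        · simp [hk3, hk1, hk2, h12, h13, h23, h12.symm, h13.symm, h23.symm]
        · simp [hk1, hk2, hk3]
  rw [hAB, Matrix.det_one_add_mul_comm]
  have hBA : (Matrix.of fun (a : Fin 3) j => if j = ![i₁, i₂, i₃] a then
          (if j = i₁ then x else if j = i₂ then y else if j = i₃ then z else 0) else 0) *
        (Matrix.of fun j a => K j (![i₁, i₂, i₃] a))
      = Matrix.of ![![x * K i₁ i₁, x * K i₁ i₂, x * K i₁ i₃],
                    ![y * K i₂ i₁, y * K i₂ i₂, y * K i₂ i₃],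
                    ![z * K i₃ i₁, z * K i₃ i₂, z * K i₃ i₃]] := by
    ext a b
    simp only [Matrix.mul_apply, Matrix.of_apply, ite_mul, zero_mul, Finset.sum_ite_eq',
      Finset.mem_univ, if_true]
    fin_cases a <;> fin_cases b <;>
      simp [h12, h13, h23, h12.symm, h13.symm, h23.symm]
  rw [hBA, Matrix.det_fin_three]
  simp [Matrix.add_apply, Matrix.one_apply]
  ring

theorem cycle_condition (n : ℕ) (hn : 3 ≤ n) (K Q : Matrix (Fin n) (Fin n) ℝ)
    (hQ : Q.IsSymm)
    (h : ∀ s : Fin n → ℝ, (∀ i, 0 < s i) →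
      (1 + K * Matrix.diagonal s).det = (1 + Q * Matrix.diagonal s).det) :
    ∀ i₁ i₂ i₃ : Fin n, i₁ ≠ i₂ → i₁ ≠ i₃ → i₂ ≠ i₃ →
      K i₁ i₂ * K i₂ i₃ * K i₃ i₁ = K i₁ i₃ * K i₂ i₁ * K i₃ i₂ := by
  intro i₁ i₂ i₃ h12 h13 h23
  -- Step 1: extend the determinant identity to all nonnegative diagonal matrices
  have h0 : ∀ s : Fin n → ℝ, (∀ i, 0 ≤ s i) →
      (1 + K * Matrix.diagonal s).det = (1 + Q * Matrix.diagonal s).det := by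
    intro s hs
    have hdc : Continuous fun t : ℝ => Matrix.diagonal (fun i => s i + t) :=
      Continuous.matrix_diagonal (continuous_pi fun i => continuous_const.add continuous_id)
    have hfc : Continuous fun t : ℝ => (1 + K * Matrix.diagonal (fun i => s i + t)).det :=
      Continuous.matrix_det (continuous_const.add (continuous_const.matrix_mul hdc))
    have hgc : Continuous fun t : ℝ => (1 + Q * Matrix.diagonal (fun i => s i + t)).det :=
      Continuous.matrix_det (continuous_const.add (continuous_const.matrix_mul hdc))
    have heq : ∀ t ∈ Set.Ioi (0:ℝ),
        (1 + K * Matrix.diagonal (fun i => s i + t)).det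
          = (1 + Q * Matrix.diagonal (fun i => s i + t)).det := by
      intro t ht
      exact h _ (fun i => add_pos_of_nonneg_of_pos (hs i) ht)
    have t1 : Filter.Tendsto (fun t : ℝ => (1 + K * Matrix.diagonal (fun i => s i + t)).det)
        (nhdsWithin 0 (Set.Ioi 0)) (nhds ((1 + K * Matrix.diagonal (fun i => s i + 0)).det)) :=
      (hfc.tendsto 0).mono_left nhdsWithin_le_nhds
    have t2 : Filter.Tendsto (fun t : ℝ => (1 + K * Matrix.diagonal (fun i => s i + t)).det)
        (nhdsWithin 0 (Set.Ioi 0)) (nhds ((1 + Q * Matrix.diagonal (fun i => s i + 0)).det)) := by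
      refine Filter.Tendsto.congr' ?_ ((hgc.tendsto 0).mono_left nhdsWithin_le_nhds)
      exact (Filter.eventuallyEq_of_mem self_mem_nhdsWithin (fun t ht => (heq t ht).symm))
    have := tendsto_nhds_unique t1 t2
    simpa using this
  -- Step 2: the determinant identity for diagonal matrices supported on {i₁,i₂,i₃}
  have key : ∀ x y z : ℝ, 0 ≤ x → 0 ≤ y → 0 ≤ z →
      1 + x * K i₁ i₁ + y * K i₂ i₂ + z * K i₃ i₃
        + x*y*(K i₁ i₁ * K i₂ i₂ - K i₁ i₂ * K i₂ i₁)
        + x*z*(K i₁ i₁ * K i₃ i₃ - K i₁ i₃ * K i₃ i₁)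
        + y*z*(K i₂ i₂ * K i₃ i₃ - K i₂ i₃ * K i₃ i₂)
        + x*y*z*(K i₁ i₁ * (K i₂ i₂ * K i₃ i₃ - K i₂ i₃ * K i₃ i₂)
            - K i₁ i₂ * (K i₂ i₁ * K i₃ i₃ - K i₂ i₃ * K i₃ i₁)
            + K i₁ i₃ * (K i₂ i₁ * K i₃ i₂ - K i₂ i₂ * K i₃ i₁))
      = 1 + x * Q i₁ i₁ + y * Q i₂ i₂ + z * Q i₃ i₃
        + x*y*(Q i₁ i₁ * Q i₂ i₂ - Q i₁ i₂ * Q i₂ i₁)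
        + x*z*(Q i₁ i₁ * Q i₃ i₃ - Q i₁ i₃ * Q i₃ i₁)
        + y*z*(Q i₂ i₂ * Q i₃ i₃ - Q i₂ i₃ * Q i₃ i₂)
        + x*y*z*(Q i₁ i₁ * (Q i₂ i₂ * Q i₃ i₃ - Q i₂ i₃ * Q i₃ i₂)
            - Q i₁ i₂ * (Q i₂ i₁ * Q i₃ i₃ - Q i₂ i₃ * Q i₃ i₁)
            + Q i₁ i₃ * (Q i₂ i₁ * Q i₃ i₂ - Q i₂ i₂ * Q i₃ i₁)) := by
    intro x y z hx hy hz
    rw [← aux_det n K i₁ i₂ i₃ h12 h13 h23 x y z, ← aux_det n Q i₁ i₂ i₃ h12 h13 h23 x y z]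
    refine h0 _ (fun i => ?_)
    split_ifs <;> first | exact hx | exact hy | exact hz | exact le_refl 0
  have e1 := key 1 0 0 (by norm_num) (by norm_num) (by norm_num)
  have e2 := key 0 1 0 (by norm_num) (by norm_num) (by norm_num)
  have e3 := key 0 0 1 (by norm_num) (by norm_num) (by norm_num)
  have e12 := key 1 1 0 (by norm_num) (by norm_num) (by norm_num)
  have e13 := key 1 0 1 (by norm_num) (by norm_num) (by norm_num)
  have e23 := key 0 1 1 (by norm_num) (by norm_num) (by norm_num)
  have e123 := key 1 1 1 (by norm_num) (by norm_num) (by norm_num)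
  have d1 : K i₁ i₁ = Q i₁ i₁ := by linear_combination e1
  have d2 : K i₂ i₂ = Q i₂ i₂ := by linear_combination e2
  have d3 : K i₃ i₃ = Q i₃ i₃ := by linear_combination e3
  have c12 : K i₁ i₂ * K i₂ i₁ = Q i₁ i₂ * Q i₂ i₁ := by
    linear_combination (1 + K i₂ i₂) * e1 + (1 + Q i₁ i₁) * e2 - e12
  have c13 : K i₁ i₃ * K i₃ i₁ = Q i₁ i₃ * Q i₃ i₁ := by
    linear_combination (1 + K i₃ i₃) * e1 + (1 + Q i₁ i₁) * e3 - e13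
  have c23 : K i₂ i₃ * K i₃ i₂ = Q i₂ i₃ * Q i₃ i₂ := by
    linear_combination (1 + K i₃ i₃) * e2 + (1 + Q i₂ i₂) * e3 - e23
  have c123 : K i₁ i₁ * (K i₂ i₂ * K i₃ i₃ - K i₂ i₃ * K i₃ i₂)
      - K i₁ i₂ * (K i₂ i₁ * K i₃ i₃ - K i₂ i₃ * K i₃ i₁)
      + K i₁ i₃ * (K i₂ i₁ * K i₃ i₂ - K i₂ i₂ * K i₃ i₁)
      = Q i₁ i₁ * (Q i₂ i₂ * Q i₃ i₃ - Q i₂ i₃ * Q i₃ i₂)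
      - Q i₁ i₂ * (Q i₂ i₁ * Q i₃ i₃ - Q i₂ i₃ * Q i₃ i₁)
      + Q i₁ i₃ * (Q i₂ i₁ * Q i₃ i₂ - Q i₂ i₂ * Q i₃ i₁) := by
    linear_combination e123 - e12 - e13 - e23 + e1 + e2 + e3
  have s12 : Q i₂ i₁ = Q i₁ i₂ := hQ.apply i₁ i₂
  have s13 : Q i₃ i₁ = Q i₁ i₃ := hQ.apply i₁ i₃
  have s23 : Q i₃ i₂ = Q i₂ i₃ := hQ.apply i₂ i₃
  have hsum : K i₁ i₂ * K i₂ i₃ * K i₃ i₁ + K i₁ i₃ * K i₂ i₁ * K i₃ i₂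
      = 2 * (Q i₁ i₂ * Q i₂ i₃ * Q i₃ i₁) := by
    linear_combination c123 - (K i₂ i₂ * K i₃ i₃) * d1 - (Q i₁ i₁ * K i₃ i₃) * d2
      - (Q i₁ i₁ * Q i₂ i₂) * d3 + (K i₂ i₃ * K i₃ i₂) * d1 + Q i₁ i₁ * c23
      + (K i₁ i₂ * K i₂ i₁) * d3 + Q i₃ i₃ * c12 + (K i₁ i₃ * K i₃ i₁) * d2 + Q i₂ i₂ * c13
      - (Q i₂ i₁ * Q i₃ i₂) * s13 + (Q i₃ i₁ * Q i₃ i₂) * s12 + (Q i₃ i₁ * Q i₁ i₂) * s23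
  have hprod : (K i₁ i₂ * K i₂ i₃ * K i₃ i₁) * (K i₁ i₃ * K i₂ i₁ * K i₃ i₂)
      = (Q i₁ i₂ * Q i₂ i₃ * Q i₃ i₁) * (Q i₁ i₂ * Q i₂ i₃ * Q i₃ i₁) := by
    linear_combination (K i₂ i₃ * K i₃ i₂ * K i₁ i₃ * K i₃ i₁) * c12
      + (Q i₁ i₂ * Q i₂ i₁ * K i₁ i₃ * K i₃ i₁) * c23
      + (Q i₁ i₂ * Q i₂ i₁ * Q i₂ i₃ * Q i₃ i₂) * c13
      + (Q i₁ i₂ * Q i₂ i₃ * Q i₃ i₂ * Q i₁ i₃ * Q i₃ i₁) * s12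
      + (Q i₁ i₂ * Q i₁ i₂ * Q i₂ i₃ * Q i₁ i₃ * Q i₃ i₁) * s23
      - (Q i₁ i₂ * Q i₁ i₂ * Q i₂ i₃ * Q i₂ i₃ * Q i₃ i₁) * s13
  have hzero : (K i₁ i₂ * K i₂ i₃ * K i₃ i₁ - K i₁ i₃ * K i₂ i₁ * K i₃ i₂) ^ 2 = 0 := by
    linear_combination (K i₁ i₂ * K i₂ i₃ * K i₃ i₁ + K i₁ i₃ * K i₂ i₁ * K i₃ i₂
      + 2 * (Q i₁ i₂ * Q i₂ i₃ * Q i₃ i₁)) * hsum - 4 * hprod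
  exact sub_eq_zero.mp (sq_eq_zero_iff.mp hzero)
end

section
/- Let W = {w_{j,k}}_{j,k=1,2,3} be a symmetric 3×3 matrix with strictly positive entries such that w_{j,k} ≤ min(w_{j,j}, w_{k,k}) for all j,k. Suppose there exist x₀ ∈ ℝ³ and δ > 0 such that for every x = (x₁,x₂,x₃) in the Euclidean ball B_δ(x₀), the cycle condition (w_{1,2}+x₂)(w_{2,3}+x₃)(w_{3,1}+x₁) = (w_{1,3}+x₃)(w_{2,1}+x₁)(w_{3,2}+x₂) holds. Then there exist Λ₁,Λ₂,Λ₃ ≥ 0 and d ≥ 0 such that w_{j,k} = Λ_j δ_{j,k} + d for all j,k = 1,2,3. -/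
/-!
The cycle condition says that the cubic polynomial `cycleDefect w` vanishes on an open ball.
Its mixed second difference in the coordinate directions `i ≠ j` is the step product times a
difference of two off-diagonal entries of `w` (the coefficient of `xᵢ xⱼ`), so on the ball these
entries must agree. With symmetry all off-diagonal entries then equal one number `d`, and
`w j k ≤ min (w j j) (w k k)` makes the diagonal excesses `w j j - d` nonnegative.
-/

open Metric EuclideanSpace

def cycleDefect (w : Fin 3 → Fin 3 → ℝ) (x : EuclideanSpace ℝ (Fin 3)) : ℝ :=
  (w 0 1 + x 1) * (w 1 2 + x 2) * (w 2 0 + x 0) - (w 0 2 + x 2) * (w 1 0 + x 0) * (w 2 1 + x 1)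

def secondDiff {E : Type*} [Add E] (g : E → ℝ) (x u v : E) : ℝ :=
  g (x + u + v) - g (x + u) - g (x + v) + g x

lemma secondDiff_eq_zero_of_eq_zero_on_ball {E : Type*} [SeminormedAddCommGroup E]
    {g : E → ℝ} {x₀ : E} {δ : ℝ} (hg : ∀ x ∈ ball x₀ δ, g x = 0) {u v : E}
    (huv : ‖u‖ + ‖v‖ < δ) : secondDiff g x₀ u v = 0 := by
  have mem : ∀ y : E, ‖y‖ < δ → x₀ + y ∈ ball x₀ δ := fun y hy => by simpa using hy
  have hu : ‖u‖ < δ := by linarith [norm_nonneg v]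
  have hv : ‖v‖ < δ := by linarith [norm_nonneg u]
  have huv' : ‖u + v‖ < δ := (norm_add_le u v).trans_lt huv
  have hx₀ : g x₀ = 0 := hg x₀ (mem_ball_self (by linarith [norm_nonneg u, norm_nonneg v]))
  simp only [secondDiff, add_assoc, hg _ (mem _ huv'), hg _ (mem _ hu), hg _ (mem _ hv), hx₀]
  ring

lemma secondDiff_cycleDefect_single_zero_one (w : Fin 3 → Fin 3 → ℝ)
    (x : EuclideanSpace ℝ (Fin 3)) (s t : ℝ) :
    secondDiff (cycleDefect w) x (single 0 s) (single 1 t) = s * t * (w 1 2 - w 0 2) := by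
  simp only [secondDiff, cycleDefect, PiLp.add_apply, PiLp.single_apply, Fin.reduceEq,
    if_true, if_false, add_zero]
  ring

lemma secondDiff_cycleDefect_single_zero_two (w : Fin 3 → Fin 3 → ℝ)
    (x : EuclideanSpace ℝ (Fin 3)) (s t : ℝ) :
    secondDiff (cycleDefect w) x (single 0 s) (single 2 t) = s * t * (w 0 1 - w 2 1) := by
  simp only [secondDiff, cycleDefect, PiLp.add_apply, PiLp.single_apply, Fin.reduceEq,
    if_true, if_false, add_zero]
  ring

lemma offDiag_eq_of_cycleDefect_eq_zero_on_ball {w : Fin 3 → Fin 3 → ℝ}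
    {x₀ : EuclideanSpace ℝ (Fin 3)} {δ : ℝ} (hδ : 0 < δ)
    (h : ∀ x ∈ ball x₀ δ, cycleDefect w x = 0) : w 1 2 = w 0 2 ∧ w 0 1 = w 2 1 := by
  set e := δ / 3 with he_def
  have he : e * e ≠ 0 := by positivity
  have hsmall : ∀ i j : Fin 3, ‖single i e‖ + ‖single j e‖ < δ := fun i j => by
    simp only [PiLp.norm_single, Real.norm_eq_abs, abs_of_pos (by positivity : 0 < e)]
    linarith [he_def]
  have h01 := secondDiff_eq_zero_of_eq_zero_on_ball h (hsmall 0 1)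
  have h02 := secondDiff_eq_zero_of_eq_zero_on_ball h (hsmall 0 2)
  rw [secondDiff_cycleDefect_single_zero_one, mul_eq_zero, or_iff_right he, sub_eq_zero] at h01
  rw [secondDiff_cycleDefect_single_zero_two, mul_eq_zero, or_iff_right he, sub_eq_zero] at h02
  exact ⟨h01, h02⟩

lemma exists_diag_add_const_of_offDiag_eq {w : Fin 3 → Fin 3 → ℝ}
    (hsymm : ∀ j k, w j k = w k j) (hpos : ∀ j k, 0 < w j k)
    (hle : ∀ j k, w j k ≤ min (w j j) (w k k))
    (h₁ : w 1 2 = w 0 2) (h₂ : w 0 1 = w 2 1) :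
    ∃ (Λ : Fin 3 → ℝ) (d : ℝ), (∀ j, 0 ≤ Λ j) ∧ 0 ≤ d ∧
      ∀ j k, w j k = (if j = k then Λ j else 0) + d := by
  have hdiag : ∀ j, w 0 1 ≤ w j j := by
    intro j
    fin_cases j
    · exact (hle 0 1).trans (min_le_left _ _)
    · exact (hle 0 1).trans (min_le_right _ _)
    · exact h₂.le.trans ((hle 2 1).trans (min_le_left _ _))
  refine ⟨fun j => w j j - w 0 1, w 0 1, fun j => sub_nonneg.mpr (hdiag j), (hpos 0 1).le, ?_⟩
  have h₃ : w 2 1 = w 1 2 := hsymm 2 1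
  intro j k
  fin_cases j <;> fin_cases k <;> simp [hsymm 1 0, hsymm 2 0, h₁, h₂, h₃]

theorem diag_plus_const_of_cycle_on_ball (w : Fin 3 → Fin 3 → ℝ)
    (hsymm : ∀ j k, w j k = w k j)
    (hpos : ∀ j k, 0 < w j k)
    (hle : ∀ j k, w j k ≤ min (w j j) (w k k))
    (x₀ : EuclideanSpace ℝ (Fin 3)) (δ : ℝ) (hδ : 0 < δ)
    (hcycle : ∀ x ∈ Metric.ball x₀ δ,
      (w 0 1 + x 1) * (w 1 2 + x 2) * (w 2 0 + x 0) =
      (w 0 2 + x 2) * (w 1 0 + x 0) * (w 2 1 + x 1)) :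
    ∃ (Λ : Fin 3 → ℝ) (d : ℝ), (∀ j, 0 ≤ Λ j) ∧ 0 ≤ d ∧
      ∀ j k, w j k = (if j = k then Λ j else 0) + d := by
  have hdefect : ∀ x ∈ ball x₀ δ, cycleDefect w x = 0 := fun x hx => sub_eq_zero.mpr (hcycle x hx)
  obtain ⟨h₁, h₂⟩ := offDiag_eq_of_cycleDefect_eq_zero_on_ball hδ hdefect
  exact exists_diag_add_const_of_offDiag_eq hsymm hpos hle h₁ h₂
end

section
/- Let W be a symmetric 3×3 real matrix such that the cycle condition (w_{1,2}+x₂)(w_{2,3}+x₃)(w_{3,1}+x₁) = (w_{1,3}+x₃)(w_{2,1}+x₁)(w_{3,2}+x₂) holds for all (x₁,x₂,x₃) in some open ball in ℝ³. Then w_{2,3} = w_{1,3}, w_{1,2} = w_{3,2}, and w_{3,1} = w_{2,1}; in particular all off-diagonal entries of W are equal. -/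
/-!
Both sides of the cycle condition are products of three affine factors in distinct coordinates,
so the mixed second difference of either side in two coordinates `xᵢ, xⱼ` with step `t` is
`t²` times the remaining factor. Taking these differences inside the ball compares the third
factors and yields the three equalities; symmetry of `W` then identifies all off-diagonal entries.
-/

open Metric Set

theorem second_difference_eq_of_eqOn_ball {E F : Type*} [SeminormedAddCommGroup E]
    [AddCommGroup F] {f g : E → F} {x₀ : E} {δ : ℝ} (h : EqOn f g (ball x₀ δ)) (hδ : 0 < δ)
    {u v : E} (hu : ‖u‖ < δ / 2) (hv : ‖v‖ < δ / 2) :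
    f (x₀ + u + v) - f (x₀ + u) - f (x₀ + v) + f x₀ =
      g (x₀ + u + v) - g (x₀ + u) - g (x₀ + v) + g x₀ := by
  have mem : ∀ y, ‖y‖ < δ → x₀ + y ∈ ball x₀ δ := fun y hy => by
    simpa [mem_ball, dist_eq_norm] using hy
  rw [h (mem_ball_self hδ), h (mem u (by linarith)), h (mem v (by linarith)),
    h (by rw [add_assoc]; exact mem _ ((norm_add_le u v).trans_lt (by linarith)))]

theorem offdiag_eq_of_symm {w : Fin 3 → Fin 3 → ℝ} (hsymm : ∀ j k, w j k = w k j)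
    (h₀ : w 1 2 = w 0 2) (h₁ : w 0 1 = w 2 1) {j k : Fin 3} (hjk : j ≠ k) : w j k = w 0 1 := by
  have h₁₀ := hsymm 1 0
  have h₂₀ := hsymm 2 0
  have h₂₁ := hsymm 2 1
  fin_cases j <;> fin_cases k <;> simp at hjk ⊢ <;> linarith

theorem offdiag_eq_of_cycle_on_ball (w : Fin 3 → Fin 3 → ℝ)
    (hsymm : ∀ j k, w j k = w k j)
    (hcycle : ∃ (x₀ : EuclideanSpace ℝ (Fin 3)) (δ : ℝ), 0 < δ ∧
      ∀ x ∈ Metric.ball x₀ δ,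
        (w 0 1 + x 1) * (w 1 2 + x 2) * (w 2 0 + x 0) =
        (w 0 2 + x 2) * (w 1 0 + x 0) * (w 2 1 + x 1)) :
    w 1 2 = w 0 2 ∧ w 0 1 = w 2 1 ∧ w 2 0 = w 1 0 ∧
      ∀ j k j' k' : Fin 3, j ≠ k → j' ≠ k' → w j k = w j' k' := by
  obtain ⟨x₀, δ, hδ, hb⟩ := hcycle
  have hstep : ∀ i : Fin 3, ‖(δ / 3) • EuclideanSpace.single i (1 : ℝ)‖ < δ / 2 := fun i => by
    simp only [norm_smul, PiLp.norm_single, norm_one, mul_one, Real.norm_eq_abs,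
      abs_of_pos (by positivity : 0 < δ / 3)]
    linarith
  have mixed (i j : Fin 3) := second_difference_eq_of_eqOn_ball hb hδ (hstep i) (hstep j)
  have m01 := mixed 0 1
  have m02 := mixed 0 2
  have m12 := mixed 1 2
  simp only [Fin.isValue, PiLp.add_apply, PiLp.smul_apply, smul_eq_mul, PiLp.single_eq_same,
    PiLp.single_eq_of_ne, ne_eq, Fin.reduceEq, one_ne_zero, zero_ne_one, not_false_eq_true,
    mul_zero, mul_one, add_zero] at m01 m02 m12
  have ht : (δ / 3) ^ 2 ≠ 0 := by positivity
  have h₀ : w 1 2 = w 0 2 := mul_left_cancel₀ ht (by linear_combination m01)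
  have h₁ : w 0 1 = w 2 1 := mul_left_cancel₀ ht (by linear_combination m02)
  have h₂ : w 2 0 = w 1 0 := mul_left_cancel₀ ht (by linear_combination m12)
  exact ⟨h₀, h₁, h₂, fun j k j' k' hjk hjk' =>
    (offdiag_eq_of_symm hsymm h₀ h₁ hjk).trans (offdiag_eq_of_symm hsymm h₀ h₁ hjk').symm⟩
end

section
/- Let Λ be an n×n diagonal matrix with nonnegative entries, G an n×n diagonal matrix with strictly positive entries, and K = Λ + 1_n G where 1_n is the all-ones matrix. Then there exists a symmetric n×n matrix Q such that det(I + K S) = det(I + Q S) for all diagonal matrices S with strictly positive diagonal entries. That is, K is symmetrizable. -/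
theorem diag_plus_ones_symmetrizable (n : ℕ) (l g : Fin n → ℝ)
    (hl : ∀ i, 0 ≤ l i) (hg : ∀ i, 0 < g i) :
    ∃ Q : Matrix (Fin n) (Fin n) ℝ, Q.IsSymm ∧
      ∀ s : Fin n → ℝ, (∀ i, 0 < s i) →
        (1 + (Matrix.diagonal l + (Matrix.of fun _ _ => (1 : ℝ)) * Matrix.diagonal g) *
            Matrix.diagonal s).det =
        (1 + Q * Matrix.diagonal s).det := by
  set K : Matrix (Fin n) (Fin n) ℝ :=
    Matrix.diagonal l + (Matrix.of fun _ _ => (1 : ℝ)) * Matrix.diagonal g with hK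
  set d : Fin n → ℝ := fun i => Real.sqrt (g i) with hd
  have hd0 : ∀ i, 0 < d i := fun i => Real.sqrt_pos.mpr (hg i)
  have hdne : ∀ i, d i ≠ 0 := fun i => (hd0 i).ne'
  have hmul : ∀ i, g i * (d i)⁻¹ = d i := by
    intro i
    rw [mul_inv_eq_iff_eq_mul₀ (hdne i)]
    exact (Real.mul_self_sqrt (hg i).le).symm
  set E : Matrix (Fin n) (Fin n) ℝ := Matrix.diagonal d with hE
  set E' : Matrix (Fin n) (Fin n) ℝ := Matrix.diagonal (fun i => (d i)⁻¹) with hE'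
  have hEE : E * E' = 1 := by
    rw [hE, hE', Matrix.diagonal_mul_diagonal]
    convert Matrix.diagonal_one with i
    exact mul_inv_cancel₀ (hdne i)
  have hE'E : E' * E = 1 := by
    rw [hE, hE', Matrix.diagonal_mul_diagonal]
    convert Matrix.diagonal_one with i
    exact inv_mul_cancel₀ (hdne i)
  refine ⟨E * K * E', ?_, ?_⟩
  · rw [Matrix.IsSymm]
    ext i j
    simp only [Matrix.transpose_apply, hE, hE', hK, Matrix.mul_diagonal,
      Matrix.diagonal_mul, Matrix.add_apply, Matrix.diagonal_apply, Matrix.of_apply]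
    by_cases h : i = j
    · subst h; ring
    · rw [if_neg h, if_neg (Ne.symm h)]
      simp only [zero_add, one_mul]
      rw [mul_assoc, mul_assoc, hmul, hmul, mul_comm]
  · intro s hs
    clear_value K
    have hcomm : E' * Matrix.diagonal s = Matrix.diagonal s * E' := by
      rw [hE', Matrix.diagonal_mul_diagonal, Matrix.diagonal_mul_diagonal]
      exact congrArg Matrix.diagonal (funext fun i => mul_comm _ _)
    have key : 1 + E * K * E' * Matrix.diagonal s
        = E * (1 + K * Matrix.diagonal s) * E' := by
      rw [Matrix.mul_add, Matrix.mul_one, Matrix.add_mul, hEE]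
      congr 1
      rw [Matrix.mul_assoc (E * K), hcomm]
      simp only [Matrix.mul_assoc]
    rw [key, Matrix.det_mul, Matrix.det_mul]
    have : E.det * E'.det = 1 := by rw [← Matrix.det_mul, hEE, Matrix.det_one]
    calc (1 + K * Matrix.diagonal s).det
        = (E.det * E'.det) * (1 + K * Matrix.diagonal s).det := by rw [this, one_mul]
      _ = E.det * (1 + K * Matrix.diagonal s).det * E'.det := by ring
end

section
/- Let u: S' × S' → ℝ be a symmetric continuous function on S' = {x₀, x₁, x₂, ...} ⊂ ℝ where x_k → x₀, with u(x_k, x₀) < u(x₀, x₀) for all k ≥ 1. Then there is no integer n₀ for which one can write u(x_j, x_k) = Λ_j δ_{x_j,x_k} + d for all j, k ≥ n₀ with Λ_j ≥ 0 and d ≥ 0. -/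
theorem no_diag_plus_const_tail (x₀ : ℝ) (x : ℕ → ℝ) (u : ℝ → ℝ → ℝ)
    (hlim : Filter.Tendsto x Filter.atTop (nhds x₀))
    (hsymm : ∀ y z : ℝ, u y z = u z y)
    (hcont : ContinuousOn (fun p : ℝ × ℝ => u p.1 p.2)
      ((insert x₀ (Set.range x)) ×ˢ (insert x₀ (Set.range x))))
    (hlt : ∀ k, u (x k) x₀ < u x₀ x₀) :
    ¬ ∃ (n₀ : ℕ) (Λ : ℕ → ℝ) (d : ℝ), (∀ j, 0 ≤ Λ j) ∧ 0 ≤ d ∧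
      ∀ j k, n₀ ≤ j → n₀ ≤ k →
        u (x j) (x k) = (if x j = x k then Λ j else 0) + d := by
  rintro ⟨n₀, Λ, d, hΛ, hd0, hdec⟩
  set S := insert x₀ (Set.range x) with hS
  have hxmem : ∀ k, x k ∈ S := fun k => Set.mem_insert_iff.2 (Or.inr ⟨k, rfl⟩)
  have hx₀mem : x₀ ∈ S := Set.mem_insert _ _
  have hne : ∀ k, x k ≠ x₀ := by
    intro k h
    have := hlt k
    rw [h] at this
    exact lt_irrefl _ this
  have hcomp : ∀ (a b : ℕ → ℝ), (∀ m, a m ∈ S) → (∀ m, b m ∈ S) →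
      ∀ p q, p ∈ S → q ∈ S →
      Filter.Tendsto a Filter.atTop (nhds p) → Filter.Tendsto b Filter.atTop (nhds q) →
      Filter.Tendsto (fun m => u (a m) (b m)) Filter.atTop (nhds (u p q)) := by
    intro a b ha hb p q hp hq hta htb
    have hc := (hcont (p, q) (Set.mk_mem_prod hp hq)).tendsto
    have hpt : Filter.Tendsto (fun m => ((a m, b m) : ℝ × ℝ)) Filter.atTop
        (nhdsWithin (p, q) (S ×ˢ S)) := by
      rw [tendsto_nhdsWithin_iff]
      exact ⟨hta.prodMk_nhds htb,
        Filter.Eventually.of_forall fun m => Set.mk_mem_prod (ha m) (hb m)⟩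
    exact hc.comp hpt
  -- eventually-constant sequences converge to their value, contradicting hne
  have hconst : ∀ (M : ℕ), (∀ j, M ≤ j → x j = x M) → False := by
    intro M h
    have : Filter.Tendsto x Filter.atTop (nhds (x M)) := by
      refine Filter.Tendsto.congr' ?_ (tendsto_const_nhds : Filter.Tendsto (fun _ : ℕ => x M) _ _)
      filter_upwards [Filter.eventually_ge_atTop M] with j hj
      exact (h j hj).symm
    exact hne M (tendsto_nhds_unique this hlim)
  -- Step 1 : u x₀ x₀ = d
  have key1 : ∀ m : ℕ, ∃ j k, max m n₀ ≤ j ∧ max m n₀ ≤ k ∧ x j ≠ x k := by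
    intro m
    by_contra h
    push_neg at h
    exact hconst (max m n₀) fun j hj => h j (max m n₀) hj le_rfl
  choose j k hj hk hjk using key1
  have htj : Filter.Tendsto (fun m => x (j m)) Filter.atTop (nhds x₀) :=
    hlim.comp (Filter.tendsto_atTop_mono (fun m => le_trans (le_max_left m n₀) (hj m))
      Filter.tendsto_id)
  have htk : Filter.Tendsto (fun m => x (k m)) Filter.atTop (nhds x₀) :=
    hlim.comp (Filter.tendsto_atTop_mono (fun m => le_trans (le_max_left m n₀) (hk m))
      Filter.tendsto_id)
  have hval1 : ∀ m, u (x (j m)) (x (k m)) = d := by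
    intro m
    rw [hdec (j m) (k m) (le_trans (le_max_right m n₀) (hj m))
      (le_trans (le_max_right m n₀) (hk m)), if_neg (hjk m), zero_add]
  have h1 : u x₀ x₀ = d := by
    have hT := hcomp (fun m => x (j m)) (fun m => x (k m)) (fun m => hxmem _)
      (fun m => hxmem _) x₀ x₀ hx₀mem hx₀mem htj htk
    have hT' : Filter.Tendsto (fun m => u (x (j m)) (x (k m))) Filter.atTop (nhds d) := by
      simpa [hval1] using (tendsto_const_nhds : Filter.Tendsto (fun _ : ℕ => d) _ _)
    exact tendsto_nhds_unique hT hT'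
  -- Step 2 : u (x n₀) x₀ = d
  have key2 : ∀ m : ℕ, ∃ k, max m n₀ ≤ k ∧ x k ≠ x n₀ := by
    intro m
    by_contra h
    push_neg at h
    refine hconst (max m n₀) fun i hi => ?_
    rw [h i hi, h (max m n₀) le_rfl]
  choose k2 hk2 hne2 using key2
  have htk2 : Filter.Tendsto (fun m => x (k2 m)) Filter.atTop (nhds x₀) :=
    hlim.comp (Filter.tendsto_atTop_mono (fun m => le_trans (le_max_left m n₀) (hk2 m))
      Filter.tendsto_id)
  have hval2 : ∀ m, u (x n₀) (x (k2 m)) = d := by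
    intro m
    rw [hdec n₀ (k2 m) le_rfl (le_trans (le_max_right m n₀) (hk2 m)),
      if_neg (Ne.symm (hne2 m)), zero_add]
  have h2 : u (x n₀) x₀ = d := by
    have hT := hcomp (fun _ => x n₀) (fun m => x (k2 m)) (fun _ => hxmem _)
      (fun m => hxmem _) (x n₀) x₀ (hxmem _) hx₀mem tendsto_const_nhds htk2
    have hT' : Filter.Tendsto (fun m => u (x n₀) (x (k2 m))) Filter.atTop (nhds d) := by
      simpa [hval2] using (tendsto_const_nhds : Filter.Tendsto (fun _ : ℕ => d) _ _)
    exact tendsto_nhds_unique hT hT'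
  have := hlt n₀
  rw [h1, h2] at this
  exact lt_irrefl _ this
end

section
/- Let K and Q be n×n real matrices such that det(I + K S) = det(I + Q S) for all diagonal matrices S with strictly positive diagonal entries, and suppose Q is symmetric. Then for all i ≠ j, K_{i,i} K_{j,j} − K_{i,j} K_{j,i} = Q_{i,i} Q_{j,j} − Q_{i,j}², and consequently K_{i,j} K_{j,i} = Q_{i,j}². -/
/-!
Both sides are continuous in `s`, so the identity extends to diagonal matrices with nonnegative
entries. For `s = t eᵢ + u eⱼ` we have `diag s = P D Pᵀ` with `P` the `n × 2` selection matrix and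
`D = diag (t, u)`, and Sylvester's identity `det (1 + A B) = det (1 + B A)` reduces
`det (1 + M diag s)` to a 2 × 2 determinant, a polynomial in `t, u` whose coefficients are the
diagonal entries `Mᵢᵢ, Mⱼⱼ` and the principal minor `Mᵢᵢ Mⱼⱼ - Mᵢⱼ Mⱼᵢ`. Comparing these
for `K` and `Q` at `(t, u) = (1, 0), (0, 1), (1, 1)` gives the claim.
-/

open Matrix Function

theorem eq_of_nonneg_of_forall_pos_eq {ι X : Type*} [TopologicalSpace X] [T2Space X]
    {f g : (ι → ℝ) → X} (hf : Continuous f) (hg : Continuous g)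
    (h : ∀ s, (∀ i, 0 < s i) → f s = g s) {s : ι → ℝ} (hs : 0 ≤ s) : f s = g s := by
  have hclosure : Set.EqOn f g (closure (Set.univ.pi fun _ => Set.Ioi 0)) :=
    Set.EqOn.closure (fun s hs => h s fun i => hs i (Set.mem_univ i)) hf hg
  apply hclosure
  simpa [closure_pi_set, Pi.le_def] using hs

namespace Matrix

variable {ι κ R : Type*} [Fintype κ] [DecidableEq ι] [DecidableEq κ] [CommRing R]

theorem diagonal_eq_mul_diagonal_comp_mul_transpose {v : κ → ι} (hv : Injective v) {s : ι → R}
    (hs : ∀ k ∉ Set.range v, s k = 0) :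
    diagonal s = (1 : Matrix ι ι R).submatrix id v * diagonal (s ∘ v) *
      ((1 : Matrix ι ι R).submatrix id v)ᵀ := by
  ext k l
  simp only [mul_apply, transpose_apply, submatrix_apply, id, one_apply, diagonal_apply]
  by_cases hk : k ∈ Set.range v
  · obtain ⟨p, rfl⟩ := hk
    rw [Finset.sum_eq_single p] <;> simp +contextual [hv.eq_iff, eq_comm]
  · have hk' : ∀ p, k ≠ v p := fun p h => hk ⟨p, h.symm⟩
    simp [hs k hk, hk']

theorem det_one_add_mul_diagonal_of_support_subset_range [Fintype ι] (M : Matrix ι ι R)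
    {v : κ → ι} (hv : Injective v) {s : ι → R} (hs : ∀ k ∉ Set.range v, s k = 0) :
    (1 + M * diagonal s).det = (1 + M.submatrix v v * diagonal (s ∘ v)).det := by
  set P := (1 : Matrix ι ι R).submatrix id v
  have hPMP : Pᵀ * M * P = M.submatrix v v := by
    ext p q
    simp [P, mul_apply, one_apply]
  rw [diagonal_eq_mul_diagonal_comp_mul_transpose hv hs, ← Matrix.mul_assoc, ← Matrix.mul_assoc,
    det_one_add_mul_comm, ← Matrix.mul_assoc, ← Matrix.mul_assoc, hPMP]

theorem det_one_add_mul_diagonal_single_add_single [Fintype ι] (M : Matrix ι ι R) {i j : ι}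
    (hij : i ≠ j) (t u : R) :
    (1 + M * diagonal (Pi.single i t + Pi.single j u)).det =
      (1 + M i i * t) * (1 + M j j * u) - M i j * M j i * t * u := by
  have hs : ∀ k ∉ Set.range ![i, j], (Pi.single i t + Pi.single j u : ι → R) k = 0 := by
    intro k hk
    have hki : k ≠ i := fun h => hk ⟨0, h.symm⟩
    have hkj : k ≠ j := fun h => hk ⟨1, h.symm⟩
    simp [hki, hkj]
  have hsv : (Pi.single i t + Pi.single j u : ι → R) ∘ ![i, j] = ![t, u] := by
    ext p
    fin_cases p <;> simp [hij, hij.symm]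
  rw [det_one_add_mul_diagonal_of_support_subset_range M (injective_pair_iff_ne.mpr hij) hs, hsv,
    det_fin_two]
  simp only [Matrix.add_apply, mul_diagonal, submatrix_apply, one_apply_eq, one_apply_ne zero_ne_one,
    one_apply_ne one_ne_zero, cons_val_zero, cons_val_one, cons_val_fin_one, zero_add]
  ring

end Matrix

theorem two_by_two_minors (n : ℕ) (K Q : Matrix (Fin n) (Fin n) ℝ)
    (hQ : Q.IsSymm)
    (h : ∀ s : Fin n → ℝ, (∀ i, 0 < s i) →
      (1 + K * Matrix.diagonal s).det = (1 + Q * Matrix.diagonal s).det) :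
    ∀ i j : Fin n, i ≠ j →
      K i i * K j j - K i j * K j i = Q i i * Q j j - Q i j ^ 2 ∧
      K i j * K j i = Q i j ^ 2 := by
  intro i j hij
  have hpair (t u : ℝ) (ht : 0 ≤ t) (hu : 0 ≤ u) :
      (1 + K i i * t) * (1 + K j j * u) - K i j * K j i * t * u =
        (1 + Q i i * t) * (1 + Q j j * u) - Q i j * Q j i * t * u := by
    rw [← det_one_add_mul_diagonal_single_add_single K hij,
      ← det_one_add_mul_diagonal_single_add_single Q hij]
    exact eq_of_nonneg_of_forall_pos_eq (by fun_prop) (by fun_prop) h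
      (add_nonneg (Pi.single_nonneg.mpr ht) (Pi.single_nonneg.mpr hu))
  have hii : K i i = Q i i := by linarith [hpair 1 0 zero_le_one le_rfl]
  have hjj : K j j = Q j j := by linarith [hpair 0 1 le_rfl zero_le_one]
  have hij_mul : K i j * K j i = Q i j ^ 2 := by
    have h11 := hpair 1 1 zero_le_one zero_le_one
    rw [hii, hjj, hQ.apply i j] at h11
    linear_combination -h11
  exact ⟨by rw [hii, hjj, hij_mul], hij_mul⟩
end

section
/- Let λ > 0 and f: ℝ → ℝ strictly monotone with e^{−λ|s−t|} + f(t) > 0 for all s,t. For any s₀ ∈ ℝ and any a > 0, the 3×3 matrix with entries M_{p,q} = e^{−λ|s_p − s_q|} + f(s_q), where s_p = s₀ + (p−1)a for p = 1,2,3, fails the cycle condition M_{1,2}M_{2,3}M_{3,1} = M_{1,3}M_{2,1}M_{3,2}, and hence is not symmetrizable. -/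
def Symmetrizable {n : ℕ} (K : Matrix (Fin n) (Fin n) ℝ) : Prop :=
  ∃ Q : Matrix (Fin n) (Fin n) ℝ, Q.IsSymm ∧
    ∀ s : Fin n → ℝ, (∀ i, 0 < s i) →
      (1 + K * Matrix.diagonal s).det = (1 + Q * Matrix.diagonal s).det

lemma det3_aux (K : Matrix (Fin 3) (Fin 3) ℝ) (s : Fin 3 → ℝ) :
    (1 + K * Matrix.diagonal s).det =
      (1 + K 0 0 * s 0) * ((1 + K 1 1 * s 1) * (1 + K 2 2 * s 2) - K 1 2 * s 2 * (K 2 1 * s 1))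
      - K 0 1 * s 1 * (K 1 0 * s 0 * (1 + K 2 2 * s 2) - K 1 2 * s 2 * (K 2 0 * s 0))
      + K 0 2 * s 2 * (K 1 0 * s 0 * (K 2 1 * s 1) - (1 + K 1 1 * s 1) * (K 2 0 * s 0)) := by
  rw [Matrix.det_fin_three]
  simp [Matrix.add_apply, Matrix.mul_diagonal, Matrix.one_apply]
  ring

theorem exp_kernel_not_symmetrizable (lam : ℝ) (hlam : 0 < lam) (f : ℝ → ℝ)
    (hf : StrictMono f ∨ StrictAnti f)
    (hpos : ∀ s t : ℝ, 0 < Real.exp (-lam * |s - t|) + f t)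
    (s₀ a : ℝ) (ha : 0 < a) :
    let s : Fin 3 → ℝ := fun p => s₀ + (p : ℝ) * a
    let M : Matrix (Fin 3) (Fin 3) ℝ :=
      Matrix.of fun p q => Real.exp (-lam * |s p - s q|) + f (s q)
    M 0 1 * M 1 2 * M 2 0 ≠ M 0 2 * M 1 0 * M 2 1 ∧ ¬ Symmetrizable M := by
  intro s M
  have hs0 : s 0 = s₀ := by simp [s]
  have hs1 : s 1 = s₀ + a := by norm_num [s]
  have hs2 : s 2 = s₀ + 2 * a := by norm_num [s]
  set u : ℝ := Real.exp (-lam * a) with hu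
  set v : ℝ := Real.exp (-lam * (2 * a)) with hv
  set x : ℝ := f (s 0) with hx
  set y : ℝ := f (s 1) with hy
  set z : ℝ := f (s 2) with hz
  have hM01 : M 0 1 = u + y := by
    show Real.exp (-lam * |s 0 - s 1|) + f (s 1) = u + y
    have : |s 0 - s 1| = a := by
      rw [hs0, hs1, show s₀ - (s₀ + a) = -a by ring, abs_neg, abs_of_pos ha]
    rw [this]
  have hM12 : M 1 2 = u + z := by
    show Real.exp (-lam * |s 1 - s 2|) + f (s 2) = u + z
    have : |s 1 - s 2| = a := by
      rw [hs1, hs2, show s₀ + a - (s₀ + 2 * a) = -a by ring, abs_neg, abs_of_pos ha]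
    rw [this]
  have hM20 : M 2 0 = v + x := by
    show Real.exp (-lam * |s 2 - s 0|) + f (s 0) = v + x
    have : |s 2 - s 0| = 2 * a := by
      rw [hs0, hs2]; rw [abs_of_pos] <;> [ring; linarith]
    rw [this]
  have hM02 : M 0 2 = v + z := by
    show Real.exp (-lam * |s 0 - s 2|) + f (s 2) = v + z
    have : |s 0 - s 2| = 2 * a := by
      rw [hs0, hs2, show s₀ - (s₀ + 2 * a) = -(2 * a) by ring, abs_neg, abs_of_pos (by linarith : (0:ℝ) < 2 * a)]
    rw [this]
  have hM10 : M 1 0 = u + x := by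
    show Real.exp (-lam * |s 1 - s 0|) + f (s 0) = u + x
    have : |s 1 - s 0| = a := by
      rw [hs0, hs1]; rw [abs_of_pos] <;> [ring; linarith]
    rw [this]
  have hM21 : M 2 1 = u + y := by
    show Real.exp (-lam * |s 2 - s 1|) + f (s 1) = u + y
    have : |s 2 - s 1| = a := by
      rw [hs1, hs2]; rw [abs_of_pos] <;> [ring; linarith]
    rw [this]
  have huv : v < u := by
    apply Real.exp_lt_exp.2; nlinarith
  have hxz : x ≠ z := by
    have h02 : s 0 < s 2 := by rw [hs0, hs2]; linarith
    rcases hf with h | h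
    · exact ne_of_lt (h h02)
    · exact ne_of_gt (h h02)
  have huy : 0 < u + y := by
    have h := hpos (s 0) (s 1)
    have habs : |s 0 - s 1| = a := by
      rw [hs0, hs1, show s₀ - (s₀ + a) = -a by ring, abs_neg, abs_of_pos ha]
    rwa [habs] at h
  have hcyc : M 0 1 * M 1 2 * M 2 0 ≠ M 0 2 * M 1 0 * M 2 1 := by
    rw [hM01, hM12, hM20, hM02, hM10, hM21]
    intro h
    have h2 : (u + y) * ((u - v) * (x - z)) = 0 := by linear_combination h
    rcases mul_eq_zero.1 h2 with h3 | h3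
    · linarith
    · rcases mul_eq_zero.1 h3 with h4 | h4
      · linarith
      · exact hxz (by linarith)
  refine ⟨hcyc, ?_⟩
  rintro ⟨Q, hsym, hdet⟩
  have hq10 : Q 1 0 = Q 0 1 := hsym.apply 0 1
  have hq20 : Q 2 0 = Q 0 2 := hsym.apply 0 2
  have hq21 : Q 2 1 = Q 1 2 := hsym.apply 1 2
  have H : ∀ t₀ t₁ t₂ : ℝ, 0 < t₀ → 0 < t₁ → 0 < t₂ →
      (1 + M 0 0 * t₀) * ((1 + M 1 1 * t₁) * (1 + M 2 2 * t₂) - M 1 2 * t₂ * (M 2 1 * t₁))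
      - M 0 1 * t₁ * (M 1 0 * t₀ * (1 + M 2 2 * t₂) - M 1 2 * t₂ * (M 2 0 * t₀))
      + M 0 2 * t₂ * (M 1 0 * t₀ * (M 2 1 * t₁) - (1 + M 1 1 * t₁) * (M 2 0 * t₀))
      =
      (1 + Q 0 0 * t₀) * ((1 + Q 1 1 * t₁) * (1 + Q 2 2 * t₂) - Q 1 2 * t₂ * (Q 2 1 * t₁))
      - Q 0 1 * t₁ * (Q 1 0 * t₀ * (1 + Q 2 2 * t₂) - Q 1 2 * t₂ * (Q 2 0 * t₀))
      + Q 0 2 * t₂ * (Q 1 0 * t₀ * (Q 2 1 * t₁) - (1 + Q 1 1 * t₁) * (Q 2 0 * t₀)) := by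
    intro t₀ t₁ t₂ h0 h1 h2
    have h := hdet ![t₀, t₁, t₂] (by intro i; fin_cases i <;> simpa)
    rw [det3_aux, det3_aux] at h
    simpa using h
  have h111 := H 1 1 1 one_pos one_pos one_pos
  have h211 := H 2 1 1 two_pos one_pos one_pos
  have h121 := H 1 2 1 one_pos two_pos one_pos
  have h112 := H 1 1 2 one_pos one_pos two_pos
  have h221 := H 2 2 1 two_pos two_pos one_pos
  have h212 := H 2 1 2 two_pos one_pos two_pos
  have h122 := H 1 2 2 one_pos two_pos two_pos
  have h222 := H 2 2 2 two_pos two_pos two_pos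
  have e0 : M 0 0 = Q 0 0 := by linarith
  have e1 : M 1 1 = Q 1 1 := by linarith
  have e2 : M 2 2 = Q 2 2 := by linarith
  have e01 : M 0 0 * M 1 1 - M 0 1 * M 1 0 = Q 0 0 * Q 1 1 - Q 0 1 * Q 1 0 := by linarith
  have e02 : M 0 0 * M 2 2 - M 0 2 * M 2 0 = Q 0 0 * Q 2 2 - Q 0 2 * Q 2 0 := by linarith
  have e12 : M 1 1 * M 2 2 - M 1 2 * M 2 1 = Q 1 1 * Q 2 2 - Q 1 2 * Q 2 1 := by linarith
  have edet : M 0 0 * (M 1 1 * M 2 2 - M 1 2 * M 2 1)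
      - M 0 1 * (M 1 0 * M 2 2 - M 1 2 * M 2 0)
      + M 0 2 * (M 1 0 * M 2 1 - M 1 1 * M 2 0)
      = Q 0 0 * (Q 1 1 * Q 2 2 - Q 1 2 * Q 2 1)
      - Q 0 1 * (Q 1 0 * Q 2 2 - Q 1 2 * Q 2 0)
      + Q 0 2 * (Q 1 0 * Q 2 1 - Q 1 1 * Q 2 0) := by linarith
  have p01 : M 0 1 * M 1 0 = Q 0 1 * Q 0 1 := by
    linear_combination Q 1 1 * e0 + M 0 0 * e1 - e01 + Q 0 1 * hq10
  have p02 : M 0 2 * M 2 0 = Q 0 2 * Q 0 2 := by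
    linear_combination Q 2 2 * e0 + M 0 0 * e2 - e02 + Q 0 2 * hq20
  have p12 : M 1 2 * M 2 1 = Q 1 2 * Q 1 2 := by
    linear_combination Q 2 2 * e1 + M 1 1 * e2 - e12 + Q 1 2 * hq21
  rw [hq10, hq20, hq21] at edet
  have hsum : M 0 1 * M 1 2 * M 2 0 + M 0 2 * M 1 0 * M 2 1
      = 2 * (Q 0 1 * Q 1 2 * Q 0 2) := by
    linear_combination edet - M 1 1 * M 2 2 * e0 - Q 0 0 * M 2 2 * e1 - Q 0 0 * Q 1 1 * e2
      + M 0 0 * p12 + Q 1 2 * Q 1 2 * e0 + M 2 2 * p01 + Q 0 1 * Q 0 1 * e2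
      + M 1 1 * p02 + Q 0 2 * Q 0 2 * e1
  have hprod : (M 0 1 * M 1 2 * M 2 0) * (M 0 2 * M 1 0 * M 2 1)
      = (Q 0 1 * Q 1 2 * Q 0 2) * (Q 0 1 * Q 1 2 * Q 0 2) := by
    have h : (M 0 1 * M 1 2 * M 2 0) * (M 0 2 * M 1 0 * M 2 1)
        = (M 0 1 * M 1 0) * (M 1 2 * M 2 1) * (M 0 2 * M 2 0) := by ring
    rw [h, p01, p02, p12]; ring
  have hsq : (M 0 1 * M 1 2 * M 2 0 - M 0 2 * M 1 0 * M 2 1) ^ 2 = 0 := by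
    linear_combination (M 0 1 * M 1 2 * M 2 0 + M 0 2 * M 1 0 * M 2 1
      + 2 * (Q 0 1 * Q 1 2 * Q 0 2)) * hsum - 4 * hprod
  exact hcyc (sub_eq_zero.1 (pow_eq_zero_iff two_ne_zero |>.1 hsq))
end
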